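/- (Closed form for the isotropic fourth-moment term.) Let m ≥ 2 be an integer, let μ be the Haar probability measure on the real orthogonal group O(m), and let A and B be m×m real diagonal matrices with diagonal entries a_1,…,a_m and b_1,…,b_m. Write S_a = Σ_i a_i, S_{a²} = Σ_i a_i², and similarly S_b, S_{b²}. Then ∫_{O(m)} Tr((A Qᵀ B Q)²) dμ(Q) = [ 3·S_{a²}·S_{b²} + S_{a²}·(S_b² − S_{b²}) + S_{b²}·(S_a² − S_{a²}) − (S_a² − S_{a²})(S_b² − S_{b²})/(m−1) ] / (m(m+2)). -/

import Mathlib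

/-!
Expanding the trace gives `∑ a_i a_j b_k b_l E[Q_ki Q_kj Q_li Q_lj]`, so only these fourth moments
of a Haar orthogonal matrix are needed. Left multiplication by an orthogonal matrix preserves the
law of `Q`: row permutations make the rows exchangeable, and a Householder reflection sending row
`k` to `(3/5) row_k ± (4/5) row_l` gives, after averaging the two signs,
`E[Q_ki² Q_kj²] = E[Q_ki² Q_lj²] + 2 E[Q_ki Q_kj Q_li Q_lj]`. Orthonormality of the columns adds
`∑_l Q_ki² Q_lj² = Q_ki²` and, for `i ≠ j`, `∑_l Q_ki Q_kj Q_li Q_lj = 0`. Solving this linear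
system yields the moments `3 / (m (m + 2))`, `1 / (m (m + 2))` and `-1 / ((m - 1) m (m + 2))`.
-/

open MeasureTheory Matrix Finset

variable {n : Type*} [Fintype n] [DecidableEq n]

lemma trace_sq_diagonal_mul_transpose_mul_diagonal_mul {R : Type*} [CommSemiring R]
    (a b : n → R) (Q : Matrix n n R) :
    ((diagonal a * Qᵀ * diagonal b * Q) ^ 2).trace =
      ∑ i, ∑ j, ∑ k, ∑ l, a i * a j * b k * b l * (Q k i * Q k j * Q l i * Q l j) := by
  have hentry : ∀ i j,
      (diagonal a * Qᵀ * diagonal b * Q) i j = ∑ k, a i * Q k i * b k * Q k j := by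
    intro i j
    simp only [mul_apply (M := diagonal a * Qᵀ * diagonal b), mul_diagonal, diagonal_mul,
      transpose_apply]
  simp only [sq, trace, diag_apply, mul_apply (M := diagonal a * Qᵀ * diagonal b * Q), hentry,
    sum_mul_sum]
  refine sum_congr rfl fun i _ => sum_congr rfl fun j _ => sum_congr rfl fun k _ =>
    sum_congr rfl fun l _ => by ring

lemma sum_sum_mul_ite_eq {R : Type*} [CommRing R] (c : n → R) (x y : R) :
    ∑ i, ∑ j, c i * c j * (if i = j then x else y) =
      (∑ i, c i ^ 2) * x + ((∑ i, c i) ^ 2 - ∑ i, c i ^ 2) * y := by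
  have hsplit : ∀ i j, c i * c j * (if i = j then x else y) =
      c i * c j * y + if i = j then c i * c j * (x - y) else 0 := by
    intro i j
    split_ifs <;> ring
  simp only [hsplit, sum_add_distrib, sum_ite_eq, mem_univ, if_true, ← sum_mul, sq, sum_mul_sum]
  ring

lemma sum_sum_sum_sum_mul_ite_eq {R : Type*} [CommRing R] (a b : n → R) (x y z w : R) :
    ∑ i, ∑ j, ∑ k, ∑ l, a i * a j * b k * b l *
      (if i = j then (if k = l then x else y) else if k = l then z else w) =
      (∑ i, a i ^ 2) * ((∑ k, b k ^ 2) * x + ((∑ k, b k) ^ 2 - ∑ k, b k ^ 2) * y) +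
        ((∑ i, a i) ^ 2 - ∑ i, a i ^ 2) *
          ((∑ k, b k ^ 2) * z + ((∑ k, b k) ^ 2 - ∑ k, b k ^ 2) * w) := by
  rw [← sum_sum_mul_ite_eq]
  refine sum_congr rfl fun i _ => sum_congr rfl fun j _ => ?_
  rw [← apply_ite₂ (fun u v => (∑ k, b k ^ 2) * u + ((∑ k, b k) ^ 2 - ∑ k, b k ^ 2) * v),
    ← sum_sum_mul_ite_eq, mul_sum]
  refine sum_congr rfl fun k _ => ?_
  rw [mul_sum]
  refine sum_congr rfl fun l _ => ?_
  split_ifs <;> ring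

lemma sum_eq_add_card_sub_one_mul {R : Type*} [Ring R] {f : n → R} (k : n) {c : R}
    (hf : ∀ l ≠ k, f l = c) :
    ∑ l, f l = f k + (Fintype.card n - 1) * c := by
  rw [Fintype.sum_eq_add_sum_compl k, sum_congr rfl fun l hl => hf l (by simpa using hl),
    sum_const, card_compl, card_singleton, nsmul_eq_mul,
    Nat.cast_sub (Fintype.card_pos_iff.2 ⟨k⟩), Nat.cast_one]

namespace Matrix

variable {R : Type*} [Field R]

noncomputable def householder (v : n → R) : Matrix n n R :=
  1 - (2 / (v ⬝ᵥ v)) • vecMulVec v v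

lemma transpose_householder_mul_self (v : n → R) : (householder v)ᵀ * householder v = 1 := by
  have hsymm : (householder v)ᵀ = householder v := by
    simp [householder, transpose_vecMulVec]
  have hsq : vecMulVec v v * vecMulVec v v = (v ⬝ᵥ v) • vecMulVec v v := by
    rw [vecMulVec_mul_vecMulVec, vecMulVec_smul]
  -- for `v ⬝ᵥ v = 0` the junk value `2 / 0 = 0` makes `householder v = 1`
  have hc : 2 / (v ⬝ᵥ v) * (2 / (v ⬝ᵥ v)) * (v ⬝ᵥ v) = 2 * (2 / (v ⬝ᵥ v)) := by
    rcases eq_or_ne (v ⬝ᵥ v) 0 with h0 | h0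
    · simp [h0]
    · field_simp
  rw [hsymm, householder, sub_mul, mul_sub, mul_sub, smul_mul_smul, hsq, smul_smul, hc]
  simp only [one_mul, mul_one]
  module

lemma householder_mul_apply (v : n → R) (Q : Matrix n n R) (r i : n) :
    (householder v * Q) r i = Q r i - 2 / (v ⬝ᵥ v) * v r * (v ᵥ* Q) i := by
  simp only [householder, sub_mul, one_mul, smul_mul, vecMulVec_mul, sub_apply, smul_apply,
    vecMulVec_apply, smul_eq_mul, mul_assoc]

end Matrix

structure IsLeftInvariantOrthogonal (μ : Measure (n → n → ℝ)) : Prop where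
  ae_orthogonal : ∀ᵐ Q ∂μ, (of Q)ᵀ * of Q = 1
  map_mul_left : ∀ P : Matrix n n ℝ, Pᵀ * P = 1 → μ.map (fun Q => of.symm (P * of Q)) = μ

lemma isCompact_setOf_transpose_mul_self_eq_one :
    IsCompact {Q : n → n → ℝ | (of Q)ᵀ * of Q = 1} := by
  refine Metric.isCompact_of_isClosed_isBounded (isClosed_eq (by fun_prop) continuous_const) ?_
  refine (Metric.isBounded_iff_subset_closedBall 0).2 ⟨1, fun Q hQ => ?_⟩
  have hU : of Q ∈ orthogonalGroup n ℝ := (mem_orthogonalGroup_iff' n ℝ).2 hQ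
  rw [mem_closedBall_zero_iff]
  exact pi_norm_le_iff_of_nonneg zero_le_one |>.2 fun k =>
    pi_norm_le_iff_of_nonneg zero_le_one |>.2 fun i => entry_norm_bound_of_unitary hU k i

namespace IsLeftInvariantOrthogonal

variable {μ : Measure (n → n → ℝ)} (h : IsLeftInvariantOrthogonal μ)
include h

lemma integrable_of_continuous [IsFiniteMeasure μ] {f : (n → n → ℝ) → ℝ} (hf : Continuous f) :
    Integrable f μ := by
  have := hf.continuousOn.integrableOn_compact (μ := μ) isCompact_setOf_transpose_mul_self_eq_one
  rwa [IntegrableOn, Measure.restrict_eq_self_of_ae_mem (s := {Q | (of Q)ᵀ * of Q = 1})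
    h.ae_orthogonal] at this

lemma ae_sum_mul_eq : ∀ᵐ Q ∂μ, ∀ i j, ∑ k, Q k i * Q k j = (1 : Matrix n n ℝ) i j := by
  filter_upwards [h.ae_orthogonal] with Q hQ i j
  simpa [mul_apply] using congrFun (congrFun hQ i) j

lemma integral_comp_mul_left {P : Matrix n n ℝ} (hP : Pᵀ * P = 1) {f : (n → n → ℝ) → ℝ}
    (hf : Continuous f) : ∫ Q, f (of.symm (P * of Q)) ∂μ = ∫ Q, f Q ∂μ := by
  have hmeas : Measurable fun Q : n → n → ℝ => of.symm (P * of Q) := by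
    refine measurable_pi_lambda _ fun r => measurable_pi_lambda _ fun i => ?_
    simp only [of_symm_apply, mul_apply, of_apply]
    fun_prop
  have hmap := h.map_mul_left P hP
  rw [← integral_map hmeas.aemeasurable (hmap ▸ hf.aestronglyMeasurable), hmap]

lemma integral_comp_perm (σ : Equiv.Perm n) {f : (n → n → ℝ) → ℝ} (hf : Continuous f) :
    ∫ Q, f (fun r => Q (σ r)) ∂μ = ∫ Q, f Q ∂μ := by
  have hσ : (σ.permMatrix ℝ)ᵀ * σ.permMatrix ℝ = 1 := by
    rw [transpose_permMatrix, ← permMatrix_mul, mul_inv_cancel, permMatrix_one]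
  have hrows : ∀ Q : n → n → ℝ, of.symm (σ.permMatrix ℝ * of Q) = fun r => Q (σ r) := fun Q => by
    ext r i
    simp [PEquiv.toMatrix_toPEquiv_mul]
  simpa only [hrows] using h.integral_comp_mul_left hσ hf

lemma integral_comp_smul_add_smul {k l : n} (hkl : k ≠ l) {c s : ℝ} (hcs : c ^ 2 + s ^ 2 = 1)
    {F : (n → ℝ) → ℝ} (hF : Continuous F) :
    ∫ Q, F (c • Q k + s • Q l) ∂μ = ∫ Q, F (Q k) ∂μ := by
  rcases eq_or_ne c 1 with rfl | hc
  · obtain rfl : s = 0 := by nlinarith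
    simp
  -- the reflection exchanging `e k` and `c • e k + s • e l`
  set v : n → ℝ := Pi.single k (1 - c) + Pi.single l (-s)
  have hvv : v ⬝ᵥ v = 2 * (1 - c) := by
    simp only [v, dotProduct_add, dotProduct_single, Pi.add_apply, Pi.single_eq_same,
      Pi.single_eq_of_ne hkl, Pi.single_eq_of_ne hkl.symm, add_zero, zero_add]
    linear_combination hcs
  have hrow : ∀ Q : n → n → ℝ, of.symm (householder v * of Q) k = c • Q k + s • Q l := by
    intro Q
    ext i
    rw [of_symm_apply, householder_mul_apply, hvv]
    simp only [v, of_apply, Pi.add_apply, Pi.single_eq_same, Pi.single_eq_of_ne hkl, add_zero,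
      add_vecMul, single_vecMul, of_row, neg_smul, Pi.smul_apply, smul_eq_mul, Pi.neg_apply]
    field_simp
    ring
  simpa only [hrow] using h.integral_comp_mul_left (transpose_householder_mul_self v)
    (f := fun Q => F (Q k)) (by fun_prop)

variable [IsProbabilityMeasure μ]

lemma integral_sq_entry (k i : n) : ∫ Q, Q k i ^ 2 ∂μ = 1 / Fintype.card n := by
  have hrow : ∀ k', ∫ Q, Q k' i ^ 2 ∂μ = ∫ Q, Q k i ^ 2 ∂μ := fun k' => by
    simpa using (h.integral_comp_perm (Equiv.swap k' k) (f := fun Q => Q k' i ^ 2)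
      (by fun_prop)).symm
  have hsum : ∑ k', ∫ Q, Q k' i ^ 2 ∂μ = 1 := by
    rw [← integral_finsetSum _ fun k' _ => h.integrable_of_continuous (by fun_prop)]
    rw [integral_congr_ae (h.ae_sum_mul_eq.mono fun Q hQ => by simpa [sq] using hQ i i)]
    simp
  rw [sum_congr rfl fun k' _ => hrow k', sum_const, card_univ, nsmul_eq_mul] at hsum
  have : (0 : ℝ) < Fintype.card n := by exact_mod_cast Fintype.card_pos_iff.2 ⟨k⟩
  field_simp
  linarith

lemma integral_sq_mul_sq_eq_add {k l : n} (hkl : k ≠ l) (i j : n) :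
    ∫ Q, Q k i ^ 2 * Q k j ^ 2 ∂μ =
      ∫ Q, Q k i ^ 2 * Q l j ^ 2 ∂μ + 2 * ∫ Q, Q k i * Q k j * Q l i * Q l j ∂μ := by
  set g : ℝ → (n → n → ℝ) → ℝ :=
    fun s Q => (3 / 5 * Q k i + s * Q l i) ^ 2 * (3 / 5 * Q k j + s * Q l j) ^ 2
  have hrot : ∀ s : ℝ, s ^ 2 = 16 / 25 → ∫ Q, g s Q ∂μ = ∫ Q, Q k i ^ 2 * Q k j ^ 2 ∂μ :=
    fun s hs => by
      simpa using h.integral_comp_smul_add_smul hkl (c := 3 / 5) (s := s) (by linarith)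
        (F := fun x => x i ^ 2 * x j ^ 2) (by fun_prop)
  have hswap₁ : ∫ Q, Q l i ^ 2 * Q l j ^ 2 ∂μ = ∫ Q, Q k i ^ 2 * Q k j ^ 2 ∂μ := by
    simpa using h.integral_comp_perm (Equiv.swap k l) (f := fun Q => Q k i ^ 2 * Q k j ^ 2)
      (by fun_prop)
  have hswap₂ : ∫ Q, Q l i ^ 2 * Q k j ^ 2 ∂μ = ∫ Q, Q k i ^ 2 * Q l j ^ 2 ∂μ := by
    simpa using h.integral_comp_perm (Equiv.swap k l) (f := fun Q => Q k i ^ 2 * Q l j ^ 2)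
      (by fun_prop)
  -- the two signs of `s` cancel the terms that are odd in row `l`
  have havg : ∫ Q, g (4 / 5) Q ∂μ + ∫ Q, g (-4 / 5) Q ∂μ =
      ∫ Q, 2 / 625 * (81 * (Q k i ^ 2 * Q k j ^ 2) + 144 * (Q k i ^ 2 * Q l j ^ 2) +
        144 * (Q l i ^ 2 * Q k j ^ 2) + 576 * (Q k i * Q k j * Q l i * Q l j) +
        256 * (Q l i ^ 2 * Q l j ^ 2)) ∂μ := by
    rw [← integral_add (h.integrable_of_continuous (by fun_prop))
      (h.integrable_of_continuous (by fun_prop))]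
    congr 1 with Q
    ring
  simp (disch := exact h.integrable_of_continuous (by fun_prop)) only [integral_add,
    integral_const_mul] at havg
  linarith [hrot (4 / 5) (by norm_num), hrot (-4 / 5) (by norm_num)]

lemma integral_sq_mul_sq_add_card_sub_one_mul {k l : n} (hkl : k ≠ l) (i j : n) :
    ∫ Q, Q k i ^ 2 * Q k j ^ 2 ∂μ + (Fintype.card n - 1) * ∫ Q, Q k i ^ 2 * Q l j ^ 2 ∂μ =
      1 / Fintype.card n := by
  have hsum : ∑ l', ∫ Q, Q k i ^ 2 * Q l' j ^ 2 ∂μ = 1 / Fintype.card n := by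
    rw [← integral_finsetSum _ fun l' _ => h.integrable_of_continuous (by fun_prop),
      ← h.integral_sq_entry k i]
    refine integral_congr_ae (h.ae_sum_mul_eq.mono fun Q hQ => ?_)
    simp only [← mul_sum, sq]
    rw [hQ j j, one_apply_eq, mul_one]
  rwa [sum_eq_add_card_sub_one_mul k fun l' hl' => by
    simpa [Equiv.swap_apply_of_ne_of_ne hl'.symm hkl] using (h.integral_comp_perm
      (Equiv.swap l' l) (f := fun Q => Q k i ^ 2 * Q l' j ^ 2) (by fun_prop)).symm] at hsum

lemma integral_sq_mul_sq_add_card_sub_one_mul_eq_zero {i j : n} (hij : i ≠ j) {k l : n}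
    (hkl : k ≠ l) :
    ∫ Q, Q k i ^ 2 * Q k j ^ 2 ∂μ +
      (Fintype.card n - 1) * ∫ Q, Q k i * Q k j * Q l i * Q l j ∂μ = 0 := by
  have hsum : ∑ l', ∫ Q, Q k i * Q k j * Q l' i * Q l' j ∂μ = 0 := by
    rw [← integral_finsetSum _ fun l' _ => h.integrable_of_continuous (by fun_prop)]
    refine integral_eq_zero_of_ae (h.ae_sum_mul_eq.mono fun Q hQ => ?_)
    simp only [mul_assoc, ← mul_sum]
    rw [hQ i j, one_apply_ne hij, mul_zero, mul_zero, Pi.zero_apply]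
  rw [sum_eq_add_card_sub_one_mul k fun l' hl' => by
    simpa [Equiv.swap_apply_of_ne_of_ne hl'.symm hkl] using (h.integral_comp_perm
      (Equiv.swap l' l) (f := fun Q => Q k i * Q k j * Q l' i * Q l' j) (by fun_prop)).symm] at hsum
  have hdiag : ∫ Q, Q k i * Q k j * Q k i * Q k j ∂μ = ∫ Q, Q k i ^ 2 * Q k j ^ 2 ∂μ := by
    congr 1 with Q
    ring
  rwa [hdiag] at hsum

lemma integral_sq_mul_sq_of_row_ne {k l : n} (hkl : k ≠ l) (i : n) :
    ∫ Q, Q k i ^ 2 * Q l i ^ 2 ∂μ = 1 / (Fintype.card n * (Fintype.card n + 2)) := by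
  have hmix := h.integral_sq_mul_sq_eq_add hkl i i
  have hnorm := h.integral_sq_mul_sq_add_card_sub_one_mul hkl i i
  have hE : ∫ Q, Q k i * Q k i * Q l i * Q l i ∂μ = ∫ Q, Q k i ^ 2 * Q l i ^ 2 ∂μ := by
    congr 1 with Q
    ring
  have hm : (1 : ℝ) < Fintype.card n := by exact_mod_cast Fintype.one_lt_card_iff.2 ⟨k, l, hkl⟩
  rw [hE] at hmix
  rw [eq_div_iff (by positivity)] at hnorm ⊢
  linear_combination hnorm - Fintype.card n * hmix

lemma integral_pow_four [Nontrivial n] (k i : n) :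
    ∫ Q, Q k i ^ 4 ∂μ = 3 / (Fintype.card n * (Fintype.card n + 2)) := by
  obtain ⟨l, hlk⟩ := exists_ne k
  have hmix := h.integral_sq_mul_sq_eq_add hlk.symm i i
  have hE : ∫ Q, Q k i * Q k i * Q l i * Q l i ∂μ = ∫ Q, Q k i ^ 2 * Q l i ^ 2 ∂μ := by
    congr 1 with Q
    ring
  have hD : ∫ Q, Q k i ^ 4 ∂μ = ∫ Q, Q k i ^ 2 * Q k i ^ 2 ∂μ := by
    congr 1 with Q
    ring
  rw [hD, hmix, hE, h.integral_sq_mul_sq_of_row_ne hlk.symm]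
  ring

lemma integral_sq_mul_sq_of_col_ne [Nontrivial n] {i j : n} (hij : i ≠ j) (k : n) :
    ∫ Q, Q k i ^ 2 * Q k j ^ 2 ∂μ = 1 / (Fintype.card n * (Fintype.card n + 2)) := by
  obtain ⟨l, hlk⟩ := exists_ne k
  have hmix := h.integral_sq_mul_sq_eq_add hlk.symm i j
  have hnorm := h.integral_sq_mul_sq_add_card_sub_one_mul hlk.symm i j
  have hcross := h.integral_sq_mul_sq_add_card_sub_one_mul_eq_zero hij hlk.symm
  rw [eq_div_iff (by positivity)] at hnorm ⊢
  linear_combination hnorm + Fintype.card n * (Fintype.card n - 1) * hmix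
    + 2 * Fintype.card n * hcross

lemma integral_mul_mul_mul_of_ne_of_ne {i j : n} (hij : i ≠ j) {k l : n} (hkl : k ≠ l) :
    ∫ Q, Q k i * Q k j * Q l i * Q l j ∂μ =
      -1 / ((Fintype.card n - 1) * (Fintype.card n * (Fintype.card n + 2))) := by
  have : Nontrivial n := ⟨k, l, hkl⟩
  have hm : (1 : ℝ) < Fintype.card n := by exact_mod_cast Fintype.one_lt_card
  have hcross := h.integral_sq_mul_sq_add_card_sub_one_mul_eq_zero hij hkl
  have hD := h.integral_sq_mul_sq_of_col_ne hij k
  rw [eq_div_iff (by positivity)] at hD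
  rw [eq_div_iff (mul_ne_zero (by linarith) (by positivity))]
  linear_combination Fintype.card n * (Fintype.card n + 2) * hcross - hD

theorem integral_mul_mul_mul [Nontrivial n] (i j k l : n) :
    ∫ Q, Q k i * Q k j * Q l i * Q l j ∂μ =
      (if i = j then (if k = l then 3 else 1)
        else if k = l then 1 else -1 / (Fintype.card n - 1 : ℝ)) /
          (Fintype.card n * (Fintype.card n + 2)) := by
  rcases eq_or_ne i j with rfl | hij <;> rcases eq_or_ne k l with rfl | hkl
  · rw [if_pos rfl, if_pos rfl, ← h.integral_pow_four k i]
    congr 1 with Q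
    ring
  · rw [if_pos rfl, if_neg hkl, ← h.integral_sq_mul_sq_of_row_ne hkl i]
    congr 1 with Q
    ring
  · rw [if_neg hij, if_pos rfl, ← h.integral_sq_mul_sq_of_col_ne hij k]
    congr 1 with Q
    ring
  · rw [if_neg hij, if_neg hkl, h.integral_mul_mul_mul_of_ne_of_ne hij hkl, div_div]

end IsLeftInvariantOrthogonal

/-- **closed form for the isotropic fourth-moment term.** For
diagonal matrices `A = diagonal a`, `B = diagonal b` and the Haar probability
measure `μ` on `O(m)` with `m ≥ 2`, writing `Sa = Σ a i`, `Sa2 = Σ (a i)²`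
(and similarly for `b`),
`∫ Tr((A Qᵀ B Q)²) dμ
  = [3·Sa2·Sb2 + Sa2·(Sb² − Sb2) + Sb2·(Sa² − Sa2)
     − (Sa² − Sa2)(Sb² − Sb2)/(m−1)] / (m(m+2))`. -/
theorem isotropic_fourth_moment_closed_form (m : ℕ) (hm : 2 ≤ m)
    (μ : Measure (Fin m → Fin m → ℝ)) [IsProbabilityMeasure μ]
    (hsupp : μ {Q | (Matrix.of Q)ᵀ * Matrix.of Q = 1} = 1)
    (hinv : ∀ P : Matrix (Fin m) (Fin m) ℝ, Pᵀ * P = 1 →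
      μ.map (fun Q => Matrix.of.symm (P * Matrix.of Q)) = μ)
    (a b : Fin m → ℝ) :
    ∫ Q, ((diagonal a * (Matrix.of Q)ᵀ * diagonal b * Matrix.of Q) ^ 2).trace ∂μ =
      (3 * (∑ i, (a i) ^ 2) * (∑ i, (b i) ^ 2) +
        (∑ i, (a i) ^ 2) * ((∑ i, b i) ^ 2 - ∑ i, (b i) ^ 2) +
        (∑ i, (b i) ^ 2) * ((∑ i, a i) ^ 2 - ∑ i, (a i) ^ 2) -
        ((∑ i, a i) ^ 2 - ∑ i, (a i) ^ 2) *
          ((∑ i, b i) ^ 2 - ∑ i, (b i) ^ 2) / ((m : ℝ) - 1)) /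
      ((m : ℝ) * ((m : ℝ) + 2)) := by
  have h : IsLeftInvariantOrthogonal μ := by
    refine ⟨(ae_iff_measure_eq ?_).2 (by rw [hsupp, measure_univ]), hinv⟩
    exact (isClosed_eq (by fun_prop) continuous_const).measurableSet.nullMeasurableSet
  have : Nontrivial (Fin m) := Fin.nontrivial_iff_two_le.2 hm
  simp_rw [trace_sq_diagonal_mul_transpose_mul_diagonal_mul, of_apply]
  simp (disch := exact fun _ _ => h.integrable_of_continuous (by fun_prop)) only
    [integral_finsetSum]
  simp_rw [integral_const_mul, h.integral_mul_mul_mul, Fintype.card_fin, ite_div]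
  rw [sum_sum_sum_sum_mul_ite_eq]
  field_simp
  ring
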